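/- Let f and g be generators and r, s ∈ {0,1}². Define h : [0,1] → [0,∞) by h(x) := ∫₀¹ f(frac((−1)^{r₁} x + (−1)^{r₁+s₂} y)) g(y) dy, and let t := ((r₁+r₂) mod 2, (s₁+s₂+1) mod 2) ∈ {0,1}². Then h is a generator, and for every (u₁, u₂) ∈ [0,1]², ∫₀^{u₁} ∫₀^{u₂} ∫₀¹ f(frac((−1)^{r₁} z + (−1)^{r₂} x)) · g(frac((−1)^{s₁} y + (−1)^{s₂} z)) dz dy dx = ∫₀^{u₁} ∫₀^{u₂} h(frac((−1)^{t₁} x + (−1)^{t₂} y)) dy dx. That is, the Darsow–Nguyen–Olsen *-product of the copulas C_f^r and C_g^s is the copula C_h^t, so the family of such copulas is closed under the *-product. -/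

import Mathlib

open MeasureTheory

/-- A generator: a probability density on `[0,1]`. -/
def IsGenerator (f : ℝ → ℝ) : Prop :=
  Measurable f ∧ (∀ x ∈ Set.Icc (0:ℝ) 1, 0 ≤ f x) ∧ ∫ x in Set.Icc (0:ℝ) 1, f x = 1

/-!
Write `a, b, c, d` for the four signs `(-1)^{r₁}, (-1)^{r₂}, (-1)^{s₁}, (-1)^{s₂}`.
For `ε = ±1` the map `z ↦ fract (w + ε z)` preserves Lebesgue measure on `[0,1]`: it is a rotation
or reflection of the circle `ℝ/ℤ`, read through `ℝ/ℤ ≃ [0,1)`. Substituting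
`v = fract (c y + d z)` in the inner integral of the `*`-product and using `d² = 1`, `a² = 1`
turns `f (fract (a z + b x))` into `f (fract (a · fract (a b x - c d y) + a d v))`, so the inner
integral is `h (fract (a b x - c d y))`, and `a b`, `-c d` are the signs of `t`.
The same substitution in `x` shows that `∫ f (fract (a x + b y)) g y dx = g y` for every `y`,
which gives `∫ h = ∫ f · ∫ g = 1` by Fubini.
-/

open Set Int

section

variable {ε : ℝ}

theorem fract_mul_fract_add (hε : ε = 1 ∨ ε = -1) (x y : ℝ) :
    fract (ε * fract x + y) = fract (ε * x + y) := by
  rw [fract_eq_fract, ← self_sub_floor]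
  rcases hε with rfl | rfl
  · exact ⟨-⌊x⌋, by push_cast; ring⟩
  · exact ⟨⌊x⌋, by ring⟩

theorem UnitAddCircle.measurePreserving_coe_equivIco :
    MeasurePreserving (fun θ : UnitAddCircle => (AddCircle.equivIco 1 0 θ : ℝ))
      volume (volume.restrict (Icc (0:ℝ) 1)) := by
  have hι : Measurable fun θ : UnitAddCircle => (AddCircle.equivIco 1 0 θ : ℝ) :=
    measurable_subtype_coe.comp (AddCircle.measurableEquivIco 1 0).measurable
  have hmk := UnitAddCircle.measurePreserving_mk 0
  refine ⟨hι, ?_⟩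
  have hfract : ∀ᵐ x ∂volume.restrict (Ico (0:ℝ) 1), fract x = x := by
    filter_upwards [ae_restrict_mem measurableSet_Ico] with x hx
    exact fract_eq_self.2 hx
  rw [← hmk.map_eq, Measure.map_map hι hmk.measurable]
  simp only [Function.comp_def, AddCircle.coe_equivIco_mk_apply, div_one, mul_one, zero_add]
  rw [Measure.restrict_congr_set Ioc_ae_eq_Icc.symm, ← Measure.restrict_congr_set Ico_ae_eq_Ioc,
    Measure.map_congr hfract, Measure.map_id']

theorem measurePreserving_fract_add_mul (c : ℝ) (hε : ε = 1 ∨ ε = -1) :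
    MeasurePreserving (fun z => fract (c + ε * z))
      (volume.restrict (Icc (0:ℝ) 1)) (volume.restrict (Icc (0:ℝ) 1)) := by
  have hmk : MeasurePreserving ((↑) : ℝ → UnitAddCircle) (volume.restrict (Icc (0:ℝ) 1)) := by
    simpa [Measure.restrict_congr_set Ioc_ae_eq_Icc] using UnitAddCircle.measurePreserving_mk 0
  have hι := UnitAddCircle.measurePreserving_coe_equivIco
  rcases hε with rfl | rfl
  · convert hι.comp ((measurePreserving_add_left volume (c : UnitAddCircle)).comp hmk) using 1
    funext z
    rw [Function.comp_apply, Function.comp_apply, ← AddCircle.coe_add,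
      AddCircle.coe_equivIco_mk_apply, div_one, mul_one, one_mul]
  · convert hι.comp ((Measure.measurePreserving_sub_left volume (c : UnitAddCircle)).comp hmk)
      using 1
    funext z
    rw [Function.comp_apply, Function.comp_apply, ← AddCircle.coe_sub,
      AddCircle.coe_equivIco_mk_apply, div_one, mul_one, neg_one_mul, sub_eq_add_neg]

theorem integral_fract_add_mul (c : ℝ) (hε : ε = 1 ∨ ε = -1) {ψ : ℝ → ℝ}
    (hψ : AEStronglyMeasurable ψ (volume.restrict (Icc (0:ℝ) 1))) :
    ∫ z in Icc (0:ℝ) 1, ψ (fract (c + ε * z)) = ∫ z in Icc (0:ℝ) 1, ψ z := by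
  have hmp := measurePreserving_fract_add_mul c hε
  rw [← integral_map hmp.measurable.aemeasurable (by rwa [hmp.map_eq]), hmp.map_eq]

theorem integrable_fract_mul_prod {f g : ℝ → ℝ} (hf : IntegrableOn f (Icc 0 1))
    (hg : IntegrableOn g (Icc 0 1)) (hε : ε = 1 ∨ ε = -1) (b : ℝ) :
    Integrable (fun p : ℝ × ℝ => f (fract (ε * p.1 + b * p.2)) * g p.2)
      ((volume.restrict (Icc (0:ℝ) 1)).prod (volume.restrict (Icc (0:ℝ) 1))) := by
  have hskew : MeasurePreserving (fun p : ℝ × ℝ => (p.1, fract (b * p.1 + ε * p.2)))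
      ((volume.restrict (Icc (0:ℝ) 1)).prod (volume.restrict (Icc (0:ℝ) 1)))
      ((volume.restrict (Icc (0:ℝ) 1)).prod (volume.restrict (Icc (0:ℝ) 1))) :=
    (MeasurePreserving.id _).skew_product (by fun_prop)
      (.of_forall fun y => (measurePreserving_fract_add_mul (b * y) hε).map_eq)
  have hprod := hg.mul_prod hf
  rw [← hskew.integrable_comp hprod.aestronglyMeasurable] at hprod
  refine integrable_swap_iff.mp (hprod.congr (.of_forall fun p => ?_))
  simp only [Function.comp_apply, Prod.fst_swap, Prod.snd_swap]
  rw [mul_comm, add_comm]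

theorem integral_integral_fract_mul {f g : ℝ → ℝ} (hf : IntegrableOn f (Icc 0 1))
    (hg : IntegrableOn g (Icc 0 1)) (hε : ε = 1 ∨ ε = -1) (b : ℝ) :
    ∫ x in Icc (0:ℝ) 1, ∫ y in Icc (0:ℝ) 1, f (fract (ε * x + b * y)) * g y
      = (∫ x in Icc (0:ℝ) 1, f x) * ∫ y in Icc (0:ℝ) 1, g y := by
  rw [integral_integral_swap (integrable_fract_mul_prod hf hg hε b), ← integral_const_mul]
  refine integral_congr_ae (.of_forall fun y => ?_)
  simp only [integral_mul_const, add_comm _ (b * y)]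
  rw [integral_fract_add_mul (b * y) hε hf.aestronglyMeasurable, mul_comm]

theorem IsGenerator.integrableOn {f : ℝ → ℝ} (hf : IsGenerator f) : IntegrableOn f (Icc 0 1) :=
  Integrable.of_integral_ne_zero (by rw [hf.2.2]; exact one_ne_zero)

theorem IsGenerator.integral_fract_mul {f g : ℝ → ℝ} (hf : IsGenerator f) (hg : IsGenerator g)
    (hε : ε = 1 ∨ ε = -1) (b : ℝ) :
    IsGenerator fun x => ∫ y in Icc (0:ℝ) 1, f (fract (ε * x + b * y)) * g y := by
  refine ⟨?_, fun x _ => ?_, ?_⟩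
  · have hF : Measurable fun p : ℝ × ℝ => f (fract (ε * p.1 + b * p.2)) * g p.2 :=
      (hf.1.comp (by fun_prop)).mul (hg.1.comp measurable_snd)
    exact hF.stronglyMeasurable.integral_prod_right'.measurable
  · refine setIntegral_nonneg measurableSet_Icc fun y hy => mul_nonneg (hf.2.1 _ ?_) (hg.2.1 y hy)
    exact ⟨fract_nonneg _, (fract_lt_one _).le⟩
  · rw [integral_integral_fract_mul hf.integrableOn hg.integrableOn hε b, hf.2.2, hg.2.2,
      one_mul]

theorem integral_fract_mul_fract {f g : ℝ → ℝ} (hfm : Measurable f) (hgm : Measurable g)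
    {a d : ℝ} (ha : a = 1 ∨ a = -1) (hd : d = 1 ∨ d = -1) (b c x y : ℝ) :
    ∫ z in Icc (0:ℝ) 1, f (fract (a * z + b * x)) * g (fract (c * y + d * z))
      = ∫ v in Icc (0:ℝ) 1,
          f (fract (a * fract (a * b * x + -(c * d) * y) + a * d * v)) * g v := by
  have ha2 : a * a = 1 := by rcases ha with rfl | rfl <;> norm_num
  have hd2 : d * d = 1 := by rcases hd with rfl | rfl <;> norm_num
  have had : a * d = 1 ∨ a * d = -1 := by
    rcases ha with rfl | rfl <;> rcases hd with rfl | rfl <;> norm_num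
  set ψ : ℝ → ℝ := fun v => f (fract (a * d * v + (b * x - a * c * d * y))) * g v
  have hψ : Measurable ψ := by fun_prop
  calc ∫ z in Icc (0:ℝ) 1, f (fract (a * z + b * x)) * g (fract (c * y + d * z))
      = ∫ z in Icc (0:ℝ) 1, ψ (fract (c * y + d * z)) := by
        refine integral_congr_ae (.of_forall fun z => ?_)
        simp only [ψ, fract_mul_fract_add had]
        rw [show a * d * (c * y + d * z) + (b * x - a * c * d * y) = a * z + b * x by
          linear_combination a * z * hd2]
    _ = ∫ v in Icc (0:ℝ) 1, ψ v := integral_fract_add_mul (c * y) hd hψ.aestronglyMeasurable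
    _ = _ := by
        refine integral_congr_ae (.of_forall fun v => ?_)
        simp only [ψ, fract_mul_fract_add ha]
        rw [show a * (a * b * x + -(c * d) * y) + a * d * v
            = a * d * v + (b * x - a * c * d * y) by linear_combination b * x * ha2]

end

theorem ite_bne_eq_mul (p q : Bool) :
    (if (p != q) = true then (-1 : ℝ) else 1)
      = (if p then -1 else 1) * (if q then -1 else 1) := by
  cases p <;> cases q <;> norm_num

theorem ite_beq_eq_neg_mul (p q : Bool) :
    (if (p == q) = true then (-1 : ℝ) else 1)
      = -((if p then -1 else 1) * (if q then -1 else 1)) := by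
  cases p <;> cases q <;> norm_num

theorem ite_eq_one_or_neg_one (p : Bool) :
    (if p then (-1 : ℝ) else 1) = 1 ∨ (if p then (-1 : ℝ) else 1) = -1 := by
  cases p <;> norm_num

theorem stmt_14 (r s : Fin 2 → Bool) (f g : ℝ → ℝ) (hf : IsGenerator f) (hg : IsGenerator g)
    (h : ℝ → ℝ)
    (hh : ∀ x : ℝ, h x = ∫ y in Set.Icc (0:ℝ) 1,
        f (Int.fract ((if r 0 then -1 else 1) * x +
            ((if r 0 then -1 else 1) * (if s 1 then -1 else 1)) * y)) * g y)
    (t : Fin 2 → Bool) (ht : t = ![r 0 != r 1, s 0 == s 1]) :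
    IsGenerator h ∧
    ∀ u₁ ∈ Set.Icc (0:ℝ) 1, ∀ u₂ ∈ Set.Icc (0:ℝ) 1,
      (∫ x in (0:ℝ)..u₁, ∫ y in (0:ℝ)..u₂, ∫ z in (0:ℝ)..1,
          f (Int.fract ((if r 0 then -1 else 1) * z + (if r 1 then -1 else 1) * x)) *
            g (Int.fract ((if s 0 then -1 else 1) * y + (if s 1 then -1 else 1) * z)))
      = ∫ x in (0:ℝ)..u₁, ∫ y in (0:ℝ)..u₂,
          h (Int.fract ((if t 0 then -1 else 1) * x + (if t 1 then -1 else 1) * y)) := by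
  obtain rfl : h = _ := funext hh
  have ht0 : (if t 0 then (-1 : ℝ) else 1) = (if r 0 then -1 else 1) * (if r 1 then -1 else 1) :=
    ht ▸ ite_bne_eq_mul (r 0) (r 1)
  have ht1 :
      (if t 1 then (-1 : ℝ) else 1) = -((if s 0 then -1 else 1) * (if s 1 then -1 else 1)) :=
    ht ▸ ite_beq_eq_neg_mul (s 0) (s 1)
  refine ⟨hf.integral_fract_mul hg (ite_eq_one_or_neg_one _) _, fun u₁ _ u₂ _ => ?_⟩
  refine intervalIntegral.integral_congr fun x _ => intervalIntegral.integral_congr fun y _ => ?_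
  rw [ht0, ht1, intervalIntegral.integral_of_le zero_le_one, ← integral_Icc_eq_integral_Ioc]
  exact integral_fract_mul_fract hf.1 hg.1 (ite_eq_one_or_neg_one _) (ite_eq_one_or_neg_one _)
    _ _ x y
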